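/- Let ω be irrational and T: S¹ → S¹ the rotation x ↦ x + 2πω, with S¹ = ℝ/2πℤ. Let I ⊂ S¹ be an interval with 0 < |I| < π/4, let r be the minimum over x ∈ I of the first return time of x to I under T, and let r̂ be the maximum over x ∈ I/10 (the concentric interval of one-tenth length) of the first return time to I/10. If ω has bounded type with constant M (i.e. q_{n+1} < M·q_n for all denominators q_n of the continued fraction expansion of ω), then r/r̂ ≥ M^{-10}. -/

import Mathlib

/-- The rotation `x ↦ x + 2πω` on the circle `ℝ/2πℤ`. -/
noncomputable def Trot (ω : ℝ) (x : AddCircle (2 * Real.pi)) : AddCircle (2 * Real.pi) :=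
  x + (↑(2 * Real.pi * ω) : AddCircle (2 * Real.pi))

/-- First return (hitting) time of `x` to `S` under `T`. -/
noncomputable def firstHit {α : Type*} (T : α → α) (S : Set α) (x : α) : ℕ :=
  sInf {i : ℕ | 0 < i ∧ T^[i] x ∈ S}

/-!
Let `p_n / q_n` be the convergents of `ω` and `η_n = |q_n ω - p_n|`; then `η_{n+1} + η_{n+2} ≤ η_n`.
Take `n` minimal with `2π η_n ≤ 2h`. By the best approximation property (`|iω - j| ≥ η_{n-1}` for
`0 < i < q_n`) no point of `I` returns to `I` before time `q_n`, so `r ≥ q_n`. On the other hand the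
first `q_m + q_{m+1}` points of any orbit come within `2π η_m` of every point of the circle, and
`η_{n+8} ≤ η_n / 34`, so every point of `I/10` returns to `I/10` within
`q_{n+8} + q_{n+9} ≤ M^{10} q_n` steps.
-/

open Real GenContFract
open GenContFract (of)

namespace GenContFract

variable {K : Type*} [Field K] [LinearOrder K] [FloorRing K] (v : K)

theorem exists_int_eq_contsAux (n : ℕ) : ∃ a b : ℤ, (of v).contsAux n = ⟨a, b⟩ := by
  suffices ∀ n, (∃ a b : ℤ, (of v).contsAux n = ⟨a, b⟩) ∧
      ∃ a b : ℤ, (of v).contsAux (n + 1) = ⟨a, b⟩ from (this n).1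
  intro n
  induction n with
  | zero => exact ⟨⟨1, 0, by simp [contsAux]⟩, ⌊v⌋, 1, by simp [contsAux, of_h_eq_floor]⟩
  | succ n ih =>
    obtain ⟨⟨a, b, hab⟩, ⟨c, d, hcd⟩⟩ := ih
    refine ⟨⟨c, d, hcd⟩, ?_⟩
    rcases hs : (of v).s.get? n with _ | gp
    · exact ⟨c, d, (contsAux_stable_of_terminated (by omega) hs).trans hcd⟩
    · obtain ⟨hgp, z, hz⟩ := of_partNum_eq_one_and_exists_int_partDen_eq hs
      refine ⟨z * c + a, z * d + b, ?_⟩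
      rw [contsAux_recurrence hs hab hcd, hgp, hz]
      push_cast
      ring_nf

theorem exists_int_eq_nums (n : ℕ) : ∃ a : ℤ, (of v).nums n = a := by
  obtain ⟨a, b, h⟩ := exists_int_eq_contsAux v (n + 1)
  exact ⟨a, by rw [num_eq_conts_a, nth_cont_eq_succ_nth_contAux, h]⟩

theorem exists_int_eq_dens (n : ℕ) : ∃ b : ℤ, (of v).dens n = b := by
  obtain ⟨a, b, h⟩ := exists_int_eq_contsAux v (n + 1)
  exact ⟨b, by rw [den_eq_conts_b, nth_cont_eq_succ_nth_contAux, h]⟩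

theorem one_le_of_dens [IsStrictOrderedRing K] (n : ℕ) : 1 ≤ (of v).dens n :=
  zeroth_den_eq_one (g := of v) ▸
    monotone_nat_of_le_succ (f := (of v).dens) (fun _ ↦ of_den_mono) n.zero_le

theorem exists_nat_eq_dens [IsStrictOrderedRing K] (n : ℕ) : ∃ b : ℕ, (of v).dens n = b := by
  obtain ⟨b, hb⟩ := exists_int_eq_dens v n
  have hb0 : (0 : K) ≤ b := hb ▸ zero_le_of_den
  exact ⟨b.toNat, by rw [hb]; exact_mod_cast (Int.toNat_of_nonneg (by exact_mod_cast hb0)).symm⟩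

end GenContFract

theorem Int.fract_add_of_fract_add_lt_one {R : Type*} [Ring R] [LinearOrder R]
    [IsStrictOrderedRing R] [FloorRing R] {x α : R} (hα : 0 ≤ α) (h : Int.fract x + α < 1) :
    Int.fract (x + α) = Int.fract x + α :=
  Int.fract_eq_iff.2 ⟨add_nonneg (Int.fract_nonneg x) hα, h, ⌊x⌋,
    by rw [add_sub_add_right_eq_sub, Int.self_sub_fract]⟩

theorem exists_abs_mul_sub_sub_le_of_shifts {ω u α β γ : ℝ} {a b : ℕ} (hab : 0 < a + b)
    (hα : 0 < α) (hβ : 0 < β) (hαγ : α ≤ γ) (hβγ : β ≤ γ) {ka kb : ℤ}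
    (hka : a * ω = ka + α) (hkb : b * ω = kb - β) :
    ∃ i : ℕ, 0 < i ∧ i ≤ a + b ∧ ∃ z : ℤ, |i * ω - u - z| ≤ γ := by
  set f : ℕ → ℝ := fun i ↦ Int.fract (i * ω - u)
  obtain ⟨i, hi, hmax⟩ := Finset.exists_max_image (Finset.Icc 1 (a + b)) f
    ⟨1, Finset.mem_Icc.2 ⟨le_rfl, hab⟩⟩
  rw [Finset.mem_Icc] at hi
  suffices hfi : 1 - γ ≤ f i by
    refine ⟨i, hi.1, hi.2, ⌊i * ω - u⌋ + 1, ?_⟩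
    rw [abs_sub_comm, abs_of_nonneg] <;>
      linarith [Int.self_sub_fract ((i : ℝ) * ω - u), Int.fract_lt_one ((i : ℝ) * ω - u),
        show ((⌊(i : ℝ) * ω - u⌋ + 1 : ℤ) : ℝ) = ⌊(i : ℝ) * ω - u⌋ + 1 by push_cast; ring]
  -- otherwise `i + a` or `i - b` would have a larger fractional part than the maximizer `i`
  by_contra! hfi
  rcases le_or_gt i b with hib | hib
  · have : f (i + a) = f i + α := by
      rw [← Int.fract_add_of_fract_add_lt_one hα.le (by linarith)]
      simp only [f]
      rw [← Int.fract_add_intCast _ (-ka)]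
      congr 1; push_cast; linear_combination hka
    linarith [hmax (i + a) (Finset.mem_Icc.2 ⟨by omega, by omega⟩)]
  · have : f (i - b) = f i + β := by
      rw [← Int.fract_add_of_fract_add_lt_one hβ.le (by linarith)]
      simp only [f]
      rw [← Int.fract_add_intCast _ kb]
      congr 1; push_cast [hib.le]; linear_combination -hkb
    linarith [hmax (i - b) (Finset.mem_Icc.2 ⟨by omega, by omega⟩)]

theorem Int.ne_zero_and_mul_nonpos_of_mul_add_mul_eq {x y a b i : ℤ} (ha : 0 < a) (hb : 0 < b)
    (h : x * a + y * b = i) (hi0 : 0 < i) (hib : i < b) : x ≠ 0 ∧ x * y ≤ 0 := by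
  constructor
  · rintro rfl
    rcases le_or_gt y 0 with hy | hy <;> nlinarith
  · by_contra! hxy
    rcases lt_or_gt_of_ne (left_ne_zero_of_mul hxy.ne') with hx | hx
    · nlinarith [neg_of_mul_pos_right hxy hx.le]
    · nlinarith [pos_of_mul_pos_right hxy hx.le]

theorem fib_mul_add_fib_mul_le {R : Type*} [CommSemiring R] [PartialOrder R] [IsOrderedRing R]
    {u : ℕ → R} (hu : ∀ n, u (n + 1) + u (n + 2) ≤ u n) (n k : ℕ) :
    Nat.fib (k + 1) * u (n + k) + Nat.fib k * u (n + k + 1) ≤ u n := by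
  induction k with
  | zero => simp
  | succ k ih =>
    have hstep := hu (n + k)
    have hfib : (Nat.fib (k + 2) : R) = Nat.fib (k + 1) + Nat.fib k := by
      rw [Nat.fib_add_two, add_comm]; push_cast; ring
    calc (Nat.fib (k + 1 + 1) : R) * u (n + (k + 1)) + Nat.fib (k + 1) * u (n + (k + 1) + 1)
        = Nat.fib (k + 1) * (u (n + k + 1) + u (n + k + 2)) + Nat.fib k * u (n + k + 1) := by
          rw [hfib]; ring_nf
      _ ≤ Nat.fib (k + 1) * u (n + k) + Nat.fib k * u (n + k + 1) := by gcongr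
      _ ≤ u n := ih

section Irrational

variable {ω : ℝ}

theorem Irrational.not_terminatedAt_of (hirr : Irrational ω) (n : ℕ) :
    ¬(of ω).TerminatedAt n := fun h ↦ by
  obtain ⟨q, hq⟩ := (terminates_iff_rat ω).1 ⟨n, h⟩
  exact hirr ⟨q, hq.symm⟩

theorem Irrational.exists_stream_succ_eq_some (hirr : Irrational ω) (n : ℕ) :
    ∃ ifp, IntFractPair.stream ω (n + 1) = some ifp :=
  Option.ne_none_iff_exists'.1
    (mt of_terminatedAt_n_iff_succ_nth_intFractPair_stream_eq_none.2 (hirr.not_terminatedAt_of n))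

theorem Irrational.exists_s_get?_eq (hirr : Irrational ω) (n : ℕ) :
    ∃ b : ℝ, 1 ≤ b ∧ (of ω).s.get? n = some ⟨1, b⟩ := by
  obtain ⟨ifp, h⟩ := hirr.exists_stream_succ_eq_some n
  exact ⟨ifp.b, mod_cast IntFractPair.one_le_succ_nth_stream_b h,
    get?_of_eq_some_of_succ_get?_intFractPair_stream h⟩

noncomputable def cfErr (ω : ℝ) (n : ℕ) : ℝ := (of ω).dens n * ω - (of ω).nums n

theorem neg_one_pow_mul_cfErr_pos (hirr : Irrational ω) (n : ℕ) :
    0 < (-1) ^ n * cfErr ω n := by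
  obtain ⟨ifp, hsucc⟩ := hirr.exists_stream_succ_eq_some n
  obtain ⟨ifp, hstream, hfr, -⟩ := IntFractPair.succ_nth_stream_eq_some_iff.1 hsucc
  have hfr_pos : 0 < ifp.fr := (IntFractPair.nth_stream_fr_nonneg hstream).lt_of_ne' hfr
  have hB : 0 < (of ω).dens n := zero_lt_one.trans_le (one_le_of_dens ω n)
  have hpB : 0 ≤ ((of ω).contsAux n).b := zero_le_of_contsAux_b
  have hsub := sub_convs_eq hstream
  simp only [if_neg hfr] at hsub
  have hcfErr : cfErr ω n = (of ω).dens n * (ω - (of ω).convs n) := by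
    rw [cfErr, conv_eq_num_div_den]
    field_simp
  have hBn : (of ω).dens n = ((of ω).contsAux (n + 1)).b := rfl
  rw [hcfErr, hsub, ← hBn, mul_div_assoc', mul_div_mul_comm, div_self hB.ne', one_mul,
    mul_div_assoc', pow_mul_pow_eq_one n (by norm_num)]
  positivity

theorem abs_cfErr (hirr : Irrational ω) (n : ℕ) : |cfErr ω n| = (-1) ^ n * cfErr ω n := by
  rw [← abs_of_pos (neg_one_pow_mul_cfErr_pos hirr n), abs_mul, abs_neg_one_pow, one_mul]

theorem cfErr_mul_cfErr_succ_neg (hirr : Irrational ω) (n : ℕ) :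
    cfErr ω n * cfErr ω (n + 1) < 0 := by
  have := mul_pos (neg_one_pow_mul_cfErr_pos hirr n) (neg_one_pow_mul_cfErr_pos hirr (n + 1))
  have hsq : (-1 : ℝ) ^ n * (-1) ^ n = 1 := pow_mul_pow_eq_one n (by norm_num)
  rw [pow_succ] at this
  nlinarith

theorem exists_cfErr_add_two_eq (hirr : Irrational ω) (n : ℕ) :
    ∃ b : ℝ, 1 ≤ b ∧ cfErr ω (n + 2) = b * cfErr ω (n + 1) + cfErr ω n := by
  obtain ⟨b, hb, hs⟩ := hirr.exists_s_get?_eq (n + 1)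
  refine ⟨b, hb, ?_⟩
  simp only [cfErr, nums_recurrence hs rfl rfl, dens_recurrence hs rfl rfl]
  ring

theorem abs_cfErr_succ_add_abs_cfErr_add_two_le (hirr : Irrational ω) (n : ℕ) :
    |cfErr ω (n + 1)| + |cfErr ω (n + 2)| ≤ |cfErr ω n| := by
  obtain ⟨b, hb, hrec⟩ := exists_cfErr_add_two_eq hirr n
  have hpos := neg_one_pow_mul_cfErr_pos hirr (n + 1)
  simp only [abs_cfErr hirr]
  rw [hrec]
  simp only [pow_succ] at hpos ⊢
  nlinarith [mul_nonneg (sub_nonneg.2 hb) hpos.le]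

theorem abs_cfErr_succ_le (hirr : Irrational ω) (n : ℕ) : |cfErr ω (n + 1)| ≤ |cfErr ω n| := by
  linarith [abs_cfErr_succ_add_abs_cfErr_add_two_le hirr n, abs_nonneg (cfErr ω (n + 2))]

theorem mul_abs_cfErr_add_eight_le (hirr : Irrational ω) (n : ℕ) :
    34 * |cfErr ω (n + 8)| ≤ |cfErr ω n| := by
  have h := fib_mul_add_fib_mul_le (u := fun k ↦ |cfErr ω k|)
    (abs_cfErr_succ_add_abs_cfErr_add_two_le hirr) n 8
  have hfib : Nat.fib 9 = 34 := rfl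
  rw [hfib] at h
  push_cast at h
  linarith [mul_nonneg (Nat.cast_nonneg (α := ℝ) (Nat.fib 8)) (abs_nonneg (cfErr ω (n + 8 + 1)))]

theorem exists_abs_cfErr_le (hirr : Irrational ω) {ε : ℝ} (hε : 0 < ε) :
    ∃ n, |cfErr ω n| ≤ ε := by
  have hdecay : ∀ k, 34 ^ k * |cfErr ω (8 * k)| ≤ |cfErr ω 0| := by
    intro k
    induction k with
    | zero => simp
    | succ k ih =>
      calc 34 ^ (k + 1) * |cfErr ω (8 * (k + 1))|
          = 34 ^ k * (34 * |cfErr ω (8 * k + 8)|) := by ring_nf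
        _ ≤ 34 ^ k * |cfErr ω (8 * k)| := by gcongr; exact mul_abs_cfErr_add_eight_le hirr _
        _ ≤ |cfErr ω 0| := ih
  obtain ⟨k, hk⟩ := pow_unbounded_of_one_lt (|cfErr ω 0| / ε) (by norm_num : (1 : ℝ) < 34)
  refine ⟨8 * k, ?_⟩
  rw [div_lt_iff₀ hε] at hk
  exact (lt_of_mul_lt_mul_left ((hdecay k).trans_lt hk) (by positivity)).le

theorem Irrational.nums_mul_dens_succ_sub_dens_mul_nums_succ (hirr : Irrational ω) (n : ℕ) :
    (of ω).nums n * (of ω).dens (n + 1) - (of ω).dens n * (of ω).nums (n + 1) = (-1) ^ (n + 1) :=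
  SimpContFract.determinant (s := SimpContFract.of ω) (hirr.not_terminatedAt_of n)

theorem abs_cfErr_le_abs_mul_sub (hirr : Irrational ω) {n i : ℕ} (hi0 : 0 < i)
    (hi : (i : ℝ) < (of ω).dens (n + 1)) (j : ℤ) : |cfErr ω n| ≤ |i * ω - j| := by
  obtain ⟨P₀, hP₀⟩ := exists_int_eq_nums ω n
  obtain ⟨Q₀, hQ₀⟩ := exists_int_eq_dens ω n
  obtain ⟨P₁, hP₁⟩ := exists_int_eq_nums ω (n + 1)
  obtain ⟨Q₁, hQ₁⟩ := exists_int_eq_dens ω (n + 1)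
  have hdet : P₀ * Q₁ - Q₀ * P₁ = (-1) ^ (n + 1) := by
    have := hirr.nums_mul_dens_succ_sub_dens_mul_nums_succ n
    rw [hP₀, hQ₀, hP₁, hQ₁] at this
    exact_mod_cast this
  have hD : (-1 : ℤ) ^ (n + 1) * (-1) ^ (n + 1) = 1 := pow_mul_pow_eq_one _ (by norm_num)
  -- the coordinates of `(i, j)` in the basis `(Q₀, P₀), (Q₁, P₁)` of `ℤ²`, unimodular by `hdet`
  set x := -(-1) ^ (n + 1) * (P₁ * i - Q₁ * j)
  set y := (-1) ^ (n + 1) * (P₀ * i - Q₀ * j)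
  have hxi : x * Q₀ + y * Q₁ = i := by linear_combination ((-1) ^ (n + 1) * i) * hdet + i * hD
  have hxj : x * P₀ + y * P₁ = j := by linear_combination ((-1) ^ (n + 1) * j) * hdet + j * hD
  have hsum : (i : ℝ) * ω - j = x * cfErr ω n + y * cfErr ω (n + 1) := by
    have hxi' : ((x * Q₀ + y * Q₁ : ℤ) : ℝ) = i := by exact_mod_cast hxi
    have hxj' : ((x * P₀ + y * P₁ : ℤ) : ℝ) = j := by exact_mod_cast hxj
    push_cast at hxi' hxj'
    rw [cfErr, cfErr, hP₀, hQ₀, hP₁, hQ₁]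
    linear_combination (-ω) * hxi' + hxj'
  have hQ₀ : 0 < Q₀ := by exact_mod_cast hQ₀ ▸ one_le_of_dens ω n
  have hiQ₁ : (i : ℤ) < Q₁ := by exact_mod_cast hQ₁ ▸ hi
  obtain ⟨hx, hxy⟩ := Int.ne_zero_and_mul_nonpos_of_mul_add_mul_eq hQ₀ (by omega) hxi
    (by exact_mod_cast hi0) hiQ₁
  have hprod : 0 ≤ (x * cfErr ω n) * (y * cfErr ω (n + 1)) := by
    rw [show (x * cfErr ω n) * (y * cfErr ω (n + 1))
      = ((x * y : ℤ) : ℝ) * (cfErr ω n * cfErr ω (n + 1)) by push_cast; ring]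
    exact mul_nonneg_of_nonpos_of_nonpos (by exact_mod_cast hxy)
      (cfErr_mul_cfErr_succ_neg hirr n).le
  calc |cfErr ω n| ≤ |(x : ℝ)| * |cfErr ω n| :=
        le_mul_of_one_le_left (abs_nonneg _) (by exact_mod_cast Int.one_le_abs hx)
    _ ≤ |(x : ℝ) * cfErr ω n| + |y * cfErr ω (n + 1)| := by
        rw [abs_mul]; exact le_add_of_nonneg_right (abs_nonneg _)
    _ = |(i : ℝ) * ω - j| := by
        rw [hsum, (abs_add_eq_add_abs_iff _ _).2 (mul_nonneg_iff.1 hprod)]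

theorem dens_le_of_abs_mul_sub_le (hirr : Irrational ω) {n i : ℕ} {ε : ℝ}
    (hmin : ∀ k < n, ε < |cfErr ω k|) (hi0 : 0 < i) {z : ℤ} (hz : |i * ω - z| ≤ ε) :
    (of ω).dens n ≤ i := by
  rcases n with _ | k
  · rw [zeroth_den_eq_one]; exact_mod_cast hi0
  · by_contra! hi
    exact (hmin k k.lt_succ_self).not_ge ((abs_cfErr_le_abs_mul_sub hirr hi0 hi z).trans hz)

theorem exists_abs_mul_sub_sub_le (hirr : Irrational ω) (m : ℕ) (u : ℝ) :
    ∃ i : ℕ, 0 < i ∧ (i : ℝ) ≤ (of ω).dens m + (of ω).dens (m + 1) ∧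
      ∃ z : ℤ, |i * ω - u - z| ≤ |cfErr ω m| := by
  obtain ⟨a, ha⟩ := exists_nat_eq_dens ω m
  obtain ⟨b, hb⟩ := exists_nat_eq_dens ω (m + 1)
  obtain ⟨ka, hka⟩ := exists_int_eq_nums ω m
  obtain ⟨kb, hkb⟩ := exists_int_eq_nums ω (m + 1)
  have hea : a * ω = ka + cfErr ω m := by rw [cfErr, ← ha, ← hka]; ring
  have heb : b * ω = kb + cfErr ω (m + 1) := by rw [cfErr, ← hb, ← hkb]; ring
  have ha0 : 0 < a := by exact_mod_cast zero_lt_one.trans_le (ha ▸ one_le_of_dens ω m)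
  have hle := abs_cfErr_succ_le hirr m
  have hneg := cfErr_mul_cfErr_succ_neg hirr m
  rw [ha, hb]
  rcases lt_or_gt_of_ne (left_ne_zero_of_mul hneg.ne) with hm | hm
  · obtain ⟨i, hi0, hi, hz⟩ := exists_abs_mul_sub_sub_le_of_shifts (u := u) (a := b) (b := a)
      (by omega) (pos_of_mul_neg_right hneg hm.le) (neg_pos.2 hm) ((le_abs_self _).trans hle)
      (neg_le_abs _) heb (by rw [hea]; ring)
    exact ⟨i, hi0, by rw [add_comm]; exact_mod_cast hi, hz⟩
  · obtain ⟨i, hi0, hi, hz⟩ := exists_abs_mul_sub_sub_le_of_shifts (u := u) (a := a) (b := b)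
      (by omega) hm (neg_pos.2 (neg_of_mul_neg_right hneg hm.le)) (le_abs_self _)
      ((neg_le_abs _).trans hle) hea (by rw [heb]; ring)
    exact ⟨i, hi0, by exact_mod_cast hi, hz⟩

end Irrational

section FirstReturn

variable {α : Type*} {T : α → α} {A : Set α}

theorem firstHit_pos_and_iterate_mem {x : α} (h : ∃ i, 0 < i ∧ T^[i] x ∈ A) :
    0 < firstHit T A x ∧ T^[firstHit T A x] x ∈ A :=
  Nat.sInf_mem h

theorem le_sInf_image_firstHit {B : ℝ} (hA : A.Nonempty)
    (hret : ∀ x ∈ A, ∃ i, 0 < i ∧ T^[i] x ∈ A)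
    (hB : ∀ x ∈ A, ∀ i : ℕ, 0 < i → T^[i] x ∈ A → B ≤ i) :
    B ≤ ((sInf (firstHit T A '' A) : ℕ) : ℝ) := by
  obtain ⟨x, hx, hxeq⟩ := Nat.sInf_mem (hA.image (firstHit T A))
  obtain ⟨hpos, hmem⟩ := firstHit_pos_and_iterate_mem (hret x hx)
  exact hxeq ▸ hB x hx _ hpos hmem

theorem sSup_image_firstHit_pos_and_le {B : ℝ} (hA : A.Nonempty)
    (hret : ∀ x ∈ A, ∃ i : ℕ, 0 < i ∧ (i : ℝ) ≤ B ∧ T^[i] x ∈ A) :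
    0 < sSup (firstHit T A '' A) ∧ ((sSup (firstHit T A '' A) : ℕ) : ℝ) ≤ B := by
  have hle : ∀ x ∈ A, 0 < firstHit T A x ∧ (firstHit T A x : ℝ) ≤ B := fun x hx ↦ by
    obtain ⟨i, hi0, hiB, hi⟩ := hret x hx
    have hfi : firstHit T A x ≤ i := Nat.sInf_le ⟨hi0, hi⟩
    exact ⟨(firstHit_pos_and_iterate_mem ⟨i, hi0, hi⟩).1, le_trans (by exact_mod_cast hfi) hiB⟩
  have hbdd : BddAbove (firstHit T A '' A) := ⟨⌊B⌋₊, by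
    rintro _ ⟨x, hx, rfl⟩
    exact Nat.le_floor (hle x hx).2⟩
  obtain ⟨x, hx, hxeq⟩ := Nat.sSup_mem (hA.image (firstHit T A)) hbdd
  exact hxeq ▸ hle x hx

end FirstReturn

theorem Trot_iterate (ω : ℝ) (i : ℕ) (x : AddCircle (2 * π)) :
    (Trot ω)^[i] x = x + ↑(2 * π * (i * ω)) := by
  rw [show Trot ω = (· + ↑(2 * π * ω)) from rfl, add_right_iterate_apply, ← AddCircle.coe_nsmul,
    nsmul_eq_mul]
  ring_nf

theorem AddCircle.norm_coe_two_pi_mul (y : ℝ) :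
    ‖(↑(2 * π * y) : AddCircle (2 * π))‖ = 2 * π * |y - round y| := by
  rw [AddCircle.norm_eq' _ two_pi_pos, inv_mul_cancel_left₀ two_pi_pos.ne']

theorem abs_mul_sub_round_le_of_iterate_mem_closedBall {ω h : ℝ} {c x : AddCircle (2 * π)}
    {i : ℕ} (hx : x ∈ Metric.closedBall c h) (hi : (Trot ω)^[i] x ∈ Metric.closedBall c h) :
    |i * ω - round (i * ω)| ≤ h / π := by
  have hdist := dist_triangle_right ((Trot ω)^[i] x) x c
  rw [Trot_iterate, dist_self_add_left, AddCircle.norm_coe_two_pi_mul] at hdist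
  rw [Metric.mem_closedBall] at hx hi
  rw [Trot_iterate] at hi
  rw [le_div_iff₀ pi_pos]
  linarith

theorem exists_iterate_mem_closedBall {ω : ℝ} (hirr : Irrational ω) (m : ℕ)
    (c x : AddCircle (2 * π)) {δ : ℝ} (hδ : 2 * π * |cfErr ω m| ≤ δ) :
    ∃ i : ℕ, 0 < i ∧ (i : ℝ) ≤ (of ω).dens m + (of ω).dens (m + 1) ∧
      (Trot ω)^[i] x ∈ Metric.closedBall c δ := by
  obtain ⟨y, hy⟩ := QuotientAddGroup.mk_surjective (c - x)
  obtain ⟨i, hi0, hi, z, hz⟩ := exists_abs_mul_sub_sub_le hirr m (y / (2 * π))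
  refine ⟨i, hi0, hi, ?_⟩
  have hshift : x + ↑(2 * π * (i * ω)) - c =
      (↑(2 * π * (i * ω - y / (2 * π))) : AddCircle (2 * π)) := by
    rw [mul_sub, mul_div_cancel₀ _ two_pi_pos.ne', AddCircle.coe_sub]
    change _ = _ - ((y : ℝ) : AddCircle (2 * π))
    rw [hy]
    abel
  rw [Metric.mem_closedBall, Trot_iterate, dist_eq_norm, hshift, AddCircle.norm_coe_two_pi_mul]
  calc 2 * π * |(i : ℝ) * ω - y / (2 * π) - round ((i : ℝ) * ω - y / (2 * π))|
      ≤ 2 * π * |(i : ℝ) * ω - y / (2 * π) - z| :=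
        mul_le_mul_of_nonneg_left (round_le _ z) two_pi_pos.le
    _ ≤ 2 * π * |cfErr ω m| := mul_le_mul_of_nonneg_left hz two_pi_pos.le
    _ ≤ δ := hδ

theorem le_pow_mul_of_succ_le_mul {R : Type*} [CommSemiring R] [PartialOrder R] [IsOrderedRing R]
    {u : ℕ → R} {M : R} (hM : 0 ≤ M)
    (hu : ∀ n, u (n + 1) ≤ M * u n) (n j : ℕ) : u (n + j) ≤ M ^ j * u n := by
  induction j with
  | zero => simp
  | succ j ih =>
    calc u (n + j + 1) ≤ M * u (n + j) := hu _
      _ ≤ M * (M ^ j * u n) := by gcongr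
      _ = M ^ (j + 1) * u n := by ring

theorem dens_add_eight_add_dens_add_nine_le {v M : ℝ} (hM : (√5 + 1) / 2 ≤ M)
    (hbdd : ∀ n, (of v).dens (n + 1) < M * (of v).dens n) (n : ℕ) :
    (of v).dens (n + 8) + (of v).dens (n + 8 + 1) ≤ M ^ 10 * (of v).dens n := by
  have hs := Real.sq_sqrt (show (0 : ℝ) ≤ 5 by norm_num)
  have hM0 : 0 ≤ M := le_trans (by positivity) hM
  have hgolden : M + 1 ≤ M ^ 2 := by
    have hM' : 0 ≤ M - (1 - √5) / 2 := by nlinarith [Real.sqrt_nonneg 5]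
    nlinarith [mul_nonneg (sub_nonneg.2 hM) hM']
  have h8 := le_pow_mul_of_succ_le_mul hM0 (fun k ↦ (hbdd k).le) n 8
  calc (of v).dens (n + 8) + (of v).dens (n + 8 + 1) ≤ (M + 1) * (of v).dens (n + 8) := by
        linarith [hbdd (n + 8)]
    _ ≤ M ^ 2 * (M ^ 8 * (of v).dens n) := by
        gcongr
        exact zero_le_of_den
    _ = M ^ 10 * (of v).dens n := by ring

theorem stmt8_general (ω M : ℝ) (hirr : Irrational ω)
    (hM : (Real.sqrt 5 + 1) / 2 ≤ M)
    (hbdd : ∀ n : ℕ, (GenContFract.of ω).dens (n + 1) < M * (GenContFract.of ω).dens n)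
    (c : AddCircle (2 * Real.pi)) (h : ℝ) (h0 : 0 < 2 * h) :
    M ^ (-10 : ℤ) ≤
      ((sInf (firstHit (Trot ω) (Metric.closedBall c h) '' Metric.closedBall c h) : ℕ) : ℝ) /
        ((sSup (firstHit (Trot ω) (Metric.closedBall c (h / 10)) ''
          Metric.closedBall c (h / 10)) : ℕ) : ℝ) := by
  have hh : 0 < h := by linarith
  have hε : 0 < h / π := div_pos hh pi_pos
  have hexists := exists_abs_cfErr_le hirr hε
  set n := Nat.find hexists
  have hmin : ∀ k < n, h / π < |cfErr ω k| := fun k hk ↦ not_le.1 (Nat.find_min hexists hk)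
  have hδ : 2 * π * |cfErr ω (n + 8)| ≤ h / 10 := by
    have h34 := mul_abs_cfErr_add_eight_le hirr n
    have hn := (le_div_iff₀ pi_pos).1 (Nat.find_spec hexists)
    nlinarith [pi_pos, abs_nonneg (cfErr ω (n + 8))]
  have hhit := fun x ↦ exists_iterate_mem_closedBall hirr (n + 8) c x hδ
  have hr := le_sInf_image_firstHit (T := Trot ω) (B := (of ω).dens n)
    ⟨c, Metric.mem_closedBall_self (by linarith)⟩
    (fun x _ ↦ (hhit x).imp fun i hi ↦
      ⟨hi.1, Metric.closedBall_subset_closedBall (by linarith) hi.2.2⟩)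
    (fun x hx i hi0 hi ↦ dens_le_of_abs_mul_sub_le hirr hmin hi0
      (abs_mul_sub_round_le_of_iterate_mem_closedBall hx hi))
  obtain ⟨hpos, hle⟩ := sSup_image_firstHit_pos_and_le
    ⟨c, Metric.mem_closedBall_self (by linarith)⟩ (fun x _ ↦ hhit x)
  have hq := dens_add_eight_add_dens_add_nine_le hM hbdd n
  have hM0 : 0 < M := lt_of_lt_of_le (by positivity) hM
  rw [le_div_iff₀ (by exact_mod_cast hpos), zpow_neg, zpow_ofNat]
  calc (M ^ 10)⁻¹ * _ ≤ (M ^ 10)⁻¹ * (M ^ 10 * (of ω).dens n) := by gcongr; linarith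
    _ = (of ω).dens n := inv_mul_cancel_left₀ (by positivity) _
    _ ≤ _ := hr

/-- If `ω` is irrational of bounded type with constant `M` (the continued fraction
denominators satisfy `q_{n+1} < M·q_n`), `I` is an interval (arc) of length `2h` with
`0 < 2h < π/4`, `r` is the minimal first return time to `I` over `x ∈ I` and `r̂` the
maximal first return time to the concentric interval `I/10` over `x ∈ I/10`, then
`r/r̂ ≥ M^{-10}`. -/
theorem stmt8 (ω M : ℝ) (hirr : Irrational ω)
    (hM : (Real.sqrt 5 + 1) / 2 ≤ M)
    (hbdd : ∀ n : ℕ, (GenContFract.of ω).dens (n + 1) < M * (GenContFract.of ω).dens n)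
    (c : AddCircle (2 * Real.pi)) (h : ℝ) (h0 : 0 < 2 * h) (h1 : 2 * h < Real.pi / 4) :
    M ^ (-10 : ℤ) ≤
      ((sInf (firstHit (Trot ω) (Metric.closedBall c h) '' Metric.closedBall c h) : ℕ) : ℝ) /
        ((sSup (firstHit (Trot ω) (Metric.closedBall c (h / 10)) ''
          Metric.closedBall c (h / 10)) : ℕ) : ℝ) :=
  stmt8_general ω M hirr hM hbdd c h h0
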